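/- arXiv:2412.11968 — 3 statements merged into one kernel-verified Lean document; each statement's English description precedes it below -/
import Mathlib

section
/- Let R be a ring and H ≤ G groups with H of finite index in G. Then for every right R[H]-module M, the induced module M ⊗_{R[H]} R[G] and the coinduced module Hom_{R[H]}(R[G], M) are isomorphic as R[G]-modules. -/
/-!
When `H` has finite index, `R[G]` is a Frobenius extension of `R[H]`: restricting coefficients to
`H` is an `R[H]`-bimodule map `E : R[G] → R[H]`, and for coset representatives `g_σ` every `b`
satisfies `b = ∑ g_σ E(g_σ⁻¹ b) = ∑ E(b g_σ) g_σ⁻¹`. For any Frobenius extension `A → B` with such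
dual bases `(x_i, y_i)`, the maps `m ↦ (b ↦ E(b) • m)` and `g ↦ ∑ x_i • g(y_i)` make coextension
of scalars a left adjoint of restriction of scalars, so it agrees with induction by uniqueness of
adjoints. Frobenius extensions pass to opposite rings, which handles right modules.
-/

open CategoryTheory

universe v u₁ u₂

structure FrobeniusSystem {A : Type u₁} {B : Type u₂} [Ring A] [Ring B] (f : A →+* B)
    (ι : Type*) [Fintype ι] where
  trace : B →+ A
  trace_map_mul (a : A) (b : B) : trace (f a * b) = a * trace b
  trace_mul_map (b : B) (a : A) : trace (b * f a) = trace b * a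
  x : ι → B
  y : ι → B
  sum_mul_map_trace (b : B) : ∑ i, x i * f (trace (y i * b)) = b
  sum_map_trace_mul (b : B) : ∑ i, f (trace (b * x i)) * y i = b

namespace FrobeniusSystem

variable {A : Type u₁} {B : Type u₂} [Ring A] [Ring B] {f : A →+* B} {ι : Type*} [Fintype ι]
  (F : FrobeniusSystem f ι)

open ModuleCat MulOpposite

def op : FrobeniusSystem f.op ι where
  trace := AddMonoidHom.mulOp F.trace
  trace_map_mul a b := unop_injective (F.trace_mul_map b.unop a.unop)
  trace_mul_map b a := unop_injective (F.trace_map_mul a.unop b.unop)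
  x i := MulOpposite.op (F.y i)
  y i := MulOpposite.op (F.x i)
  sum_mul_map_trace b := unop_injective <| by
    simpa only [AddMonoidHom.mulOp_apply_apply, Function.comp_apply, unop_mul, unop_op,
      RingHom.op_apply_apply, Finset.unop_sum] using F.sum_map_trace_mul b.unop
  sum_map_trace_mul b := unop_injective <| by
    simpa only [AddMonoidHom.mulOp_apply_apply, Function.comp_apply, unop_mul, unop_op,
      RingHom.op_apply_apply, Finset.unop_sum] using F.sum_mul_map_trace b.unop

/-- The element `∑ i, x i ⊗ y i` of `B ⊗[A] B` commutes with `B`, seen through the `A`-balanced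
map `x ⊗ y ↦ x • φ y`. -/
lemma sum_smul_map_mul {N : Type*} [AddCommGroup N] [Module B N] (φ : B →+ N)
    (hφ : ∀ (a : A) (c : B), φ (f a * c) = f a • φ c) (b : B) :
    ∑ i, F.x i • φ (F.y i * b) = ∑ i, (b * F.x i) • φ (F.y i) := by
  calc ∑ i, F.x i • φ (F.y i * b)
      = ∑ i, F.x i • φ (∑ j, f (F.trace (F.y i * b * F.x j)) * F.y j) := by
        simp only [F.sum_map_trace_mul]
    _ = ∑ j, (∑ i, F.x i * f (F.trace (F.y i * (b * F.x j)))) • φ (F.y j) := by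
        simp only [map_sum, hφ, Finset.smul_sum, Finset.sum_smul, mul_smul, mul_assoc]
        exact Finset.sum_comm
    _ = ∑ j, (b * F.x j) • φ (F.y j) := by simp only [F.sum_mul_map_trace]

noncomputable def traceSMul (M : ModuleCat.{max v u₂} A) (m : M) : (coextendScalars f).obj M :=
  (show (restrictScalars f).obj (of B B) →ₗ[A] M from
    { toFun b := F.trace b • m
      map_add' b c := (congrArg (· • m) (F.trace.map_add b c)).trans (add_smul _ _ _)
      map_smul' a b := (congrArg (· • m) (F.trace_map_mul a b)).trans (mul_smul _ _ _) })

noncomputable def coextendUnit (M : ModuleCat.{max v u₂} A) :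
    M ⟶ (restrictScalars f).obj ((coextendScalars f).obj M) :=
  ofHom (Y := (restrictScalars f).obj ((coextendScalars f).obj M))
    { toFun := F.traceSMul M
      map_add' m m' := LinearMap.ext fun b => smul_add (F.trace b) m m'
      map_smul' a m := LinearMap.ext fun b =>
        (mul_smul (F.trace b) a m).symm.trans (congrArg (· • m) (F.trace_mul_map b a).symm) }

noncomputable def coextendCounit (N : ModuleCat.{max v u₂} B) :
    (coextendScalars f).obj ((restrictScalars f).obj N) ⟶ N :=
  ofHom
    { toFun g := ∑ i, F.x i • (g (F.y i) : N)
      map_add' g g' :=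
        (Finset.sum_congr rfl fun i _ => smul_add _ _ _).trans Finset.sum_add_distrib
      map_smul' b g := by
        change ∑ i, F.x i • (g (F.y i * b) : N) = b • ∑ i, F.x i • (g (F.y i) : N)
        rw [Finset.smul_sum]
        simp only [← mul_smul]
        exact F.sum_smul_map_mul g.toAddMonoidHom (fun a c => g.map_smul a c) b }

lemma sum_trace_smul_apply {M : ModuleCat.{max v u₂} A}
    (g : (restrictScalars f).obj (of B B) →ₗ[A] M) (b : B) :
    ∑ i, F.trace (b * F.x i) • g (F.y i) = g b :=
  calc ∑ i, F.trace (b * F.x i) • g (F.y i)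
      = ∑ i, g (f (F.trace (b * F.x i)) * F.y i) :=
        Finset.sum_congr rfl fun _ _ => (g.map_smul _ _).symm
    _ = g b := (map_sum g _ _).symm.trans (congrArg g (F.sum_map_trace_mul b))

noncomputable def coextendRestrictScalarsAdj :
    coextendScalars.{u₁, u₂, max v u₂} f ⊣ restrictScalars.{max v u₂} f :=
  Adjunction.mkOfHomEquiv
    { homEquiv M N :=
        { toFun φ := F.coextendUnit M ≫ (restrictScalars f).map φ
          invFun ψ := (coextendScalars f).map ψ ≫ F.coextendCounit N
          left_inv φ := by
            ext g
            change ∑ i, F.x i • φ (F.traceSMul M (g (F.y i))) = φ g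
            simp only [← map_smul, ← map_sum]
            congr 1
            exact LinearMap.ext fun (b : B) =>
              (LinearMap.sum_apply _ _ _).trans (F.sum_trace_smul_apply g b)
          right_inv ψ := by
            ext m
            change ∑ i, F.x i • ψ (F.trace (F.y i) • m) = ψ m
            simp only [map_smul]
            change ∑ i, F.x i • f (F.trace (F.y i)) • ψ m = ψ m
            have h : ∑ i, F.x i * f (F.trace (F.y i)) = 1 := by
              simpa only [mul_one] using F.sum_mul_map_trace 1
            simp only [← mul_smul, ← Finset.sum_smul, h, one_smul] }
      homEquiv_naturality_left_symm _ _ := rfl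
      homEquiv_naturality_right _ _ := rfl }

end FrobeniusSystem

namespace MonoidAlgebra

variable (R : Type*) [Ring R] {G : Type*} [Group G] {H : Subgroup G}

lemma mapDomain_subtype_comapDomain_single_of_mem {g : G} (hg : g ∈ H) (r : R) :
    mapDomainRingHom R H.subtype (comapDomain Subtype.val Subtype.val_injective (single g r)) =
      single g r := by
  have := comapDomain_single_map Subtype.val Subtype.val_injective (⟨g, hg⟩ : H) r
  simp_all

lemma comapDomain_subtype_single_of_not_mem {g : G} (hg : g ∉ H) (r : R) :
    comapDomain Subtype.val Subtype.val_injective (single g r) = (0 : MonoidAlgebra R H) :=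
  comapDomain_single_of_not_mem_range (by simpa using hg) _

lemma comapDomain_subtype_mapDomain_mul (a : MonoidAlgebra R H) (b : MonoidAlgebra R G) :
    comapDomain Subtype.val Subtype.val_injective (mapDomainRingHom R H.subtype a * b) =
      a * comapDomain Subtype.val Subtype.val_injective b := by
  induction a using MonoidAlgebra.induction_linear with
  | zero => simp
  | add a a' ha ha' => simp only [map_add, add_mul, comapDomain_add, ha, ha']
  | single h s =>
    induction b using MonoidAlgebra.induction_linear with
    | zero => simp
    | add b b' hb hb' => simp only [mul_add, comapDomain_add, hb, hb']
    | single g r =>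
      by_cases hg : g ∈ H
      · lift g to H using hg
        simp only [mapDomainRingHom_apply, mapDomain_single, Subgroup.subtype_apply,
          single_mul_single]
        rw [← Subgroup.coe_mul, comapDomain_single_map, comapDomain_single_map, single_mul_single]
      · have hhg : (h : G) * g ∉ H := by rwa [H.mul_mem_cancel_left h.2]
        simp [hg, hhg]

lemma comapDomain_subtype_mul_mapDomain (b : MonoidAlgebra R G) (a : MonoidAlgebra R H) :
    comapDomain Subtype.val Subtype.val_injective (b * mapDomainRingHom R H.subtype a) =
      comapDomain Subtype.val Subtype.val_injective b * a := by
  induction a using MonoidAlgebra.induction_linear with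
  | zero => simp
  | add a a' ha ha' => simp only [map_add, mul_add, comapDomain_add, ha, ha']
  | single h s =>
    induction b using MonoidAlgebra.induction_linear with
    | zero => simp
    | add b b' hb hb' => simp only [add_mul, comapDomain_add, hb, hb']
    | single g r =>
      by_cases hg : g ∈ H
      · lift g to H using hg
        simp only [mapDomainRingHom_apply, mapDomain_single, Subgroup.subtype_apply,
          single_mul_single]
        rw [← Subgroup.coe_mul, comapDomain_single_map, comapDomain_single_map, single_mul_single]
      · have hgh : g * (h : G) ∉ H := by rwa [H.mul_mem_cancel_right h.2]
        simp [hg, hgh]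

lemma _root_.QuotientGroup.out_inv_mul_mem_iff (σ : G ⧸ H) (g : G) :
    σ.out⁻¹ * g ∈ H ↔ σ = g := by
  rw [← QuotientGroup.eq, QuotientGroup.out_eq']

variable (H) in
noncomputable def subgroupFrobeniusSystem [Fintype (G ⧸ H)] :
    FrobeniusSystem (mapDomainRingHom R H.subtype) (G ⧸ H) where
  trace := comapDomainAddMonoidHom Subtype.val Subtype.val_injective
  trace_map_mul := comapDomain_subtype_mapDomain_mul R
  trace_mul_map := comapDomain_subtype_mul_mapDomain R
  x σ := single σ.out 1
  y σ := single σ.out⁻¹ 1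
  sum_mul_map_trace b := by
    induction b using MonoidAlgebra.induction_linear with
    | zero => simp
    | add b b' hb hb' => simp only [mul_add, map_add, Finset.sum_add_distrib, hb, hb']
    | single g r =>
      have hmem (σ : G ⧸ H) : σ.out⁻¹ * g ∈ H ↔ σ = g := QuotientGroup.out_inv_mul_mem_iff σ g
      simp only [comapDomainAddMonoidHom_apply, single_mul_single, one_mul]
      refine (Fintype.sum_eq_single (g : G ⧸ H) fun σ hσ => ?_).trans ?_
      · rw [comapDomain_subtype_single_of_not_mem R (mt (hmem σ).mp hσ), map_zero, mul_zero]
      · rw [mapDomain_subtype_comapDomain_single_of_mem R ((hmem _).mpr rfl),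
          single_mul_single, mul_inv_cancel_left, one_mul]
  sum_map_trace_mul b := by
    induction b using MonoidAlgebra.induction_linear with
    | zero => simp
    | add b b' hb hb' => simp only [add_mul, map_add, Finset.sum_add_distrib, hb, hb']
    | single g r =>
      have hmem (σ : G ⧸ H) : g * σ.out ∈ H ↔ σ = (g⁻¹ : G) := by
        rw [← QuotientGroup.out_inv_mul_mem_iff, ← inv_mem_iff, mul_inv_rev]
      simp only [comapDomainAddMonoidHom_apply, single_mul_single, mul_one]
      refine (Fintype.sum_eq_single ((g⁻¹ : G) : G ⧸ H) fun σ hσ => ?_).trans ?_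
      · rw [comapDomain_subtype_single_of_not_mem R (mt (hmem σ).mp hσ), map_zero, zero_mul]
      · rw [mapDomain_subtype_comapDomain_single_of_mem R ((hmem _).mpr rfl),
          single_mul_single, mul_inv_cancel_right, mul_one]

end MonoidAlgebra

/-- Let `R` be a ring and `H ≤ G` groups with `H` of finite index in `G`. Then for every right
`R[H]`-module `M`, the induced module `M ⊗_{R[H]} R[G]` and the coinduced module
`Hom_{R[H]}(R[G], M)` are isomorphic as `R[G]`-modules. (Right modules are encoded as left
modules over the opposite group rings; induction is any left adjoint of the restriction functor,
and coinduction is `ModuleCat.coextendScalars`.) -/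
theorem induction_iso_coinduction_of_finite_index
    (G : Type) [Group G] (H : Subgroup G) (hfin : H.index ≠ 0) (R : Type) [Ring R] :
    ∀ Ind : ModuleCat (MonoidAlgebra R H)ᵐᵒᵖ ⥤ ModuleCat (MonoidAlgebra R G)ᵐᵒᵖ,
      (Ind ⊣ ModuleCat.restrictScalars
        (RingHom.op (MonoidAlgebra.mapDomainRingHom R H.subtype))) →
      ∀ M : ModuleCat (MonoidAlgebra R H)ᵐᵒᵖ,
        Nonempty (Ind.obj M ≅ (ModuleCat.coextendScalars
          (RingHom.op (MonoidAlgebra.mapDomainRingHom R H.subtype))).obj M) := by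
  intro Ind adj M
  have : Finite (G ⧸ H) := Nat.finite_of_card_ne_zero hfin
  let _ : Fintype (G ⧸ H) := Fintype.ofFinite _
  exact ⟨(adj.leftAdjointUniq
    (MonoidAlgebra.subgroupFrobeniusSystem R H).op.coextendRestrictScalarsAdj).app M⟩
end

section
/- Mackey's formula: Let R be a ring, H, K ≤ G groups, and M a right R[H]-module. Then there is an R[K]-module isomorphism Res^G_K Ind^G_H M ≅ ⊕_{g ∈ H\G/K} Ind^K_{K ∩ g⁻¹Hg} Res^{g⁻¹Hg}_{K ∩ g⁻¹Hg} (gM), where gM denotes M ⊗_{R[H]} R[Hg] with its right (g⁻¹Hg)-module structure, the sum running over a set of (H,K)-double coset representatives g. -/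
open CategoryTheory

variable {G : Type} [Group G]

/-- The subgroup `K ∩ g⁻¹Hg` of `G`. -/
def mackeyInter (H K : Subgroup G) (g : G) : Subgroup G :=
  K ⊓ Subgroup.map (MulAut.conj g⁻¹).toMonoidHom H

/-- Conjugation `x ↦ g x g⁻¹` as a group homomorphism `K ∩ g⁻¹Hg →* H`. -/
def mackeyConj (H K : Subgroup G) (g : G) : ↥(mackeyInter H K g) →* ↥H :=
  MonoidHom.codRestrict ((MulAut.conj g).toMonoidHom.comp (mackeyInter H K g).subtype) H
    (by
      rintro ⟨x, hx⟩
      obtain ⟨y, hy, rfl⟩ := (Subgroup.mem_inf.mp hx).2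
      simpa [MulAut.conj_apply, mul_assoc] using hy)

/-!
Both sides corepresent the same functor on `R[K]`-modules `X`, so they are isomorphic by Yoneda.
By the adjunctions, a map `Res_K Ind_H M → X` is an `R[H]`-map `φ : M → Res_H Coind_K X`, i.e. a
biadditive `φ(m)(z)`, `z ∈ R[G]`, with `φ(m h)(z) = φ(m)(h z)` and `φ(m)(z k) = φ(m)(z) k`, while a
map out of the coproduct is a family of `R[K ∩ g⁻¹Hg]`-maps `φ_g : gM → X`. Since `G` is the
disjoint union of the double cosets `HgK`, `φ` is determined by the components `φ_g = φ(-)(g)`, and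
any family glues back by `φ(m)(hgk) = φ_g(m h) k`. This is well defined because `hgk = h'gk'`
puts `k'k⁻¹` in `K ∩ g⁻¹Hg`, where conjugation by `g` sends it to `h'⁻¹h`. The right action of
`r s` is written as the left action of `opSingle s r = op (single s r)`.
-/

noncomputable section

namespace Mackey

open MulOpposite MonoidAlgebra ModuleCat Limits

section OpSingle

variable {R S : Type*} [Ring R] [Monoid S]

abbrev opSingle (s : S) (r : R) : (MonoidAlgebra R S)ᵐᵒᵖ := op (single s r)

lemma opSingle_mul_opSingle (s t : S) (r r' : R) :
    opSingle s r * opSingle t r' = opSingle (t * s) (r' * r) := by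
  rw [← op_mul, single_mul_single]

lemma opSingle_one_one : (opSingle 1 1 : (MonoidAlgebra R S)ᵐᵒᵖ) = 1 := by
  rw [opSingle, ← one_def, op_one]

@[elab_as_elim]
theorem opSingle_induction {motive : (MonoidAlgebra R S)ᵐᵒᵖ → Prop}
    (a : (MonoidAlgebra R S)ᵐᵒᵖ) (zero : motive 0)
    (add : ∀ a b, motive a → motive b → motive (a + b))
    (single : ∀ s r, motive (opSingle s r)) : motive a := by
  rw [← op_unop a]
  induction unop a using MonoidAlgebra.induction_linear with
  | zero => exact zero
  | add x y hx hy => exact add _ _ hx hy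
  | single s r => exact single s r

variable (R) in
abbrev opMapDomain {T : Type*} [Monoid T] (f : S →* T) :
    (MonoidAlgebra R S)ᵐᵒᵖ →+* (MonoidAlgebra R T)ᵐᵒᵖ :=
  RingHom.op (mapDomainRingHom R f)

lemma opMapDomain_opSingle {T : Type*} [Monoid T] (f : S →* T) (s : S) (r : R) :
    opMapDomain R f (opSingle s r) = opSingle (f s) r := by
  simp [mapDomainRingHom]

def linearMapOfMapOpSingleSMul {V W : Type*} [AddCommMonoid V] [AddCommMonoid W]
    [Module (MonoidAlgebra R S)ᵐᵒᵖ V] [Module (MonoidAlgebra R S)ᵐᵒᵖ W] (f : V →+ W)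
    (hf : ∀ (s : S) (r : R) (v : V), f (opSingle s r • v) = opSingle s r • f v) :
    V →ₗ[(MonoidAlgebra R S)ᵐᵒᵖ] W where
  toFun := f
  map_add' := f.map_add
  map_smul' a v := by
    induction a using opSingle_induction with
    | zero => simp
    | add a b ha hb => simp only [add_smul, map_add, ha, hb]
    | single s r => exact hf s r v

end OpSingle

section Restriction

variable {R S T₁ T₂ : Type*} [Ring R] [Monoid S] [Monoid T₁] [Monoid T₂] {φ₁ : S →* T₁}
  {φ₂ : S →* T₂} {M : ModuleCat (MonoidAlgebra R T₁)ᵐᵒᵖ} {X : ModuleCat (MonoidAlgebra R T₂)ᵐᵒᵖ}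

def restrictedAddHom
    (ψ : (restrictScalars (opMapDomain R φ₁)).obj M ⟶
      (restrictScalars (opMapDomain R φ₂)).obj X) :
    M →+ X :=
  ψ.hom.toAddMonoidHom

lemma restrictedAddHom_opSingle_smul
    (ψ : (restrictScalars (opMapDomain R φ₁)).obj M ⟶
      (restrictScalars (opMapDomain R φ₂)).obj X)
    (s : S) (r : R) (m : M) :
    restrictedAddHom ψ (opSingle (φ₁ s) r • m) = opSingle (φ₂ s) r • restrictedAddHom ψ m := by
  rw [← opMapDomain_opSingle φ₁, ← opMapDomain_opSingle φ₂]
  exact ψ.hom.map_smul (opSingle s r) m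

lemma restrictedAddHom_injective :
    Function.Injective (restrictedAddHom (φ₁ := φ₁) (φ₂ := φ₂) (M := M) (X := X)) := by
  intro ψ ψ' h
  ext m
  exact DFunLike.congr_fun h m

def restrictedHomMk (f : M →+ X)
    (hf : ∀ (s : S) (r : R) (m : M), f (opSingle (φ₁ s) r • m) = opSingle (φ₂ s) r • f m) :
    (restrictScalars (opMapDomain R φ₁)).obj M ⟶ (restrictScalars (opMapDomain R φ₂)).obj X :=
  ofHom (X := (restrictScalars (opMapDomain R φ₁)).obj M)
    (Y := (restrictScalars (opMapDomain R φ₂)).obj X) <|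
    linearMapOfMapOpSingleSMul f fun s r m => by
      have h := hf s r m
      rw [← opMapDomain_opSingle φ₁, ← opMapDomain_opSingle φ₂] at h
      exact h

end Restriction

section Coextension

variable {R S₁ S₂ T : Type*} [Ring R] [Monoid S₁] [Monoid S₂] [Monoid T] {φ₁ : S₁ →* T}
  {φ₂ : S₂ →* T} {M : ModuleCat (MonoidAlgebra R S₁)ᵐᵒᵖ} {X : ModuleCat (MonoidAlgebra R S₂)ᵐᵒᵖ}

section Eval

variable (φ : M ⟶
  (restrictScalars (opMapDomain R φ₁)).obj ((coextendScalars (opMapDomain R φ₂)).obj X))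

def coextendEval :
    M →+ (MonoidAlgebra R T)ᵐᵒᵖ →+ X :=
  AddMonoidHom.mk' (fun m => (CoextendScalars.equiv _ X (φ.hom m)).toAddMonoidHom) fun m m' =>
    AddMonoidHom.ext fun b =>
      congrArg (fun w => CoextendScalars.equiv (opMapDomain R φ₂) X w b) (φ.hom.map_add m m')

lemma coextendEval_opSingle_smul (s : S₁) (r : R) (m : M) (b : (MonoidAlgebra R T)ᵐᵒᵖ) :
    coextendEval φ (opSingle s r • m) b = coextendEval φ m (b * opSingle (φ₁ s) r) := by
  rw [← opMapDomain_opSingle φ₁]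
  exact congrArg (fun w => CoextendScalars.equiv (opMapDomain R φ₂) X w b)
    (φ.hom.map_smul (opSingle s r) m)

lemma coextendEval_opSingle_mul (m : M) (s : S₂) (r : R) (b : (MonoidAlgebra R T)ᵐᵒᵖ) :
    coextendEval φ m (opSingle (φ₂ s) r * b) = opSingle s r • coextendEval φ m b := by
  rw [← opMapDomain_opSingle φ₂]
  exact (φ.hom m).map_smul (opSingle s r) b

end Eval

lemma hom_ext_of_coextendEval_opSingle {φ φ' : M ⟶
      (restrictScalars (opMapDomain R φ₁)).obj ((coextendScalars (opMapDomain R φ₂)).obj X)}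
    (h : ∀ (m : M) (t : T) (r : R),
      coextendEval φ m (opSingle t r) = coextendEval φ' m (opSingle t r)) :
    φ = φ' := by
  ext m
  refine (CoextendScalars.equiv _ X).injective (LinearMap.ext fun b => ?_)
  change coextendEval φ m b = coextendEval φ' m b
  induction b using opSingle_induction with
  | zero => simp only [map_zero]
  | add a b ha hb => simp only [map_add, ha, hb]
  | single t r => exact h m t r

def coextendMk (f : (MonoidAlgebra R T)ᵐᵒᵖ →+ X)
    (hf : ∀ (t : T) (r : R) (s : S₂) (r' : R),
      f (opSingle (t * φ₂ s) (r * r')) = opSingle s r' • f (opSingle t r)) :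
    (coextendScalars (opMapDomain R φ₂)).obj X :=
  (CoextendScalars.equiv _ X).symm <| linearMapOfMapOpSingleSMul
    (V := (restrictScalars (opMapDomain R φ₂)).obj (of _ (MonoidAlgebra R T)ᵐᵒᵖ)) f
    fun s r' (b : (MonoidAlgebra R T)ᵐᵒᵖ) => by
      change f (opMapDomain R φ₂ (opSingle s r') * b) = opSingle s r' • f b
      rw [opMapDomain_opSingle]
      induction b using opSingle_induction with
      | zero => simp only [mul_zero, map_zero, smul_zero]
      | add a b ha hb => simp only [mul_add, map_add, smul_add, ha, hb]
      | single t r => rw [opSingle_mul_opSingle]; exact hf t r s r'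

def coextendHomMk (F : M →+ (MonoidAlgebra R T)ᵐᵒᵖ →+ X)
    (hF₂ : ∀ (m : M) (t : T) (r : R) (s : S₂) (r' : R),
      F m (opSingle (t * φ₂ s) (r * r')) = opSingle s r' • F m (opSingle t r))
    (hF₁ : ∀ (m : M) (t : T) (r : R) (s : S₁) (r' : R),
      F (opSingle s r' • m) (opSingle t r) = F m (opSingle (φ₁ s * t) (r' * r))) :
    M ⟶ (restrictScalars (opMapDomain R φ₁)).obj ((coextendScalars (opMapDomain R φ₂)).obj X) :=
  ofHom
    (Y := (restrictScalars (opMapDomain R φ₁)).obj ((coextendScalars (opMapDomain R φ₂)).obj X)) <|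
    linearMapOfMapOpSingleSMul
      (AddMonoidHom.mk' (fun m : M => (coextendMk (F m) (hF₂ m) :
        (coextendScalars (opMapDomain R φ₂)).obj X)) fun m m' =>
        (CoextendScalars.equiv _ X).injective <|
          LinearMap.ext fun (b : (MonoidAlgebra R T)ᵐᵒᵖ) => by
            change F (m + m') b = F m b + F m' b
            rw [map_add, AddMonoidHom.add_apply])
      fun s r' m => (CoextendScalars.equiv _ X).injective <|
        LinearMap.ext fun (b : (MonoidAlgebra R T)ᵐᵒᵖ) => by
          change F (opSingle s r' • m) b = F m (b * opMapDomain R φ₁ (opSingle s r'))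
          rw [opMapDomain_opSingle]
          induction b using opSingle_induction with
          | zero => simp only [zero_mul, map_zero]
          | add a b ha hb => simp only [add_mul, map_add, ha, hb]
          | single t r => rw [opSingle_mul_opSingle]; exact hF₁ m t r s r'

end Coextension

section DoubleCosets

variable (H K : Subgroup G)

abbrev mackeyInterIncl (g : G) : mackeyInter H K g →* K :=
  Subgroup.inclusion inf_le_left

lemma mackeyConj_apply_coe (g : G) (x : mackeyInter H K g) :
    (mackeyConj H K g x : G) = g * x * g⁻¹ :=
  rfl

lemma exists_mackeyInter_of_mul_mul_eq {g : G} {h h' : H} {k k' : K}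
    (he : (h : G) * g * k = h' * g * k') :
    ∃ x : mackeyInter H K g, h = h' * mackeyConj H K g x ∧ mackeyInterIncl H K g x * k = k' := by
  have hh : (h : G) = h' * (g * (k' * (k : G)⁻¹) * g⁻¹) := by
    calc (h : G) = h * g * k * (k : G)⁻¹ * g⁻¹ := by group
      _ = h' * (g * (k' * (k : G)⁻¹) * g⁻¹) := by rw [he]; group
  have hx : (k' : G) * (k : G)⁻¹ ∈ mackeyInter H K g := by
    refine Subgroup.mem_inf.mpr ⟨K.mul_mem k'.2 (K.inv_mem k.2),
      (h' : G)⁻¹ * h, H.mul_mem (H.inv_mem h'.2) h.2, ?_⟩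
    rw [MulEquiv.coe_toMonoidHom, MulAut.conj_apply, hh]
    group
  exact ⟨⟨_, hx⟩, Subtype.ext hh, Subtype.ext (inv_mul_cancel_right _ _)⟩

lemma mk_mul_out_mul (q : DoubleCoset.Quotient (H : Set G) K) {h k : G} (hh : h ∈ H)
    (hk : k ∈ K) : DoubleCoset.mk H K (h * q.out * k) = q :=
  ((DoubleCoset.eq H K _ _).mpr ⟨h, hh, k, hk, rfl⟩).symm.trans (DoubleCoset.out_eq' H K q)

lemma exists_mul_out_mul_eq (g : G) :
    ∃ p : H × K, (p.1 : G) * (DoubleCoset.mk H K g).out * p.2 = g := by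
  obtain ⟨h, hh, k, hk, e⟩ :=
    (DoubleCoset.eq H K _ _).mp (DoubleCoset.out_eq' H K (DoubleCoset.mk H K g))
  exact ⟨(⟨h, hh⟩, ⟨k, hk⟩), e.symm⟩

def doubleCosetFactors (g : G) : H × K :=
  (exists_mul_out_mul_eq H K g).choose

lemma doubleCosetFactors_spec (g : G) :
    ((doubleCosetFactors H K g).1 : G) * (DoubleCoset.mk H K g).out * (doubleCosetFactors H K g).2
      = g :=
  (exists_mul_out_mul_eq H K g).choose_spec

end DoubleCosets

section Components

variable {H K : Subgroup G} {R : Type*} [Ring R] {M : ModuleCat (MonoidAlgebra R H)ᵐᵒᵖ}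
  {X : ModuleCat (MonoidAlgebra R K)ᵐᵒᵖ}

variable (φ : M ⟶ (restrictScalars (opMapDomain R H.subtype)).obj
  ((coextendScalars (opMapDomain R K.subtype)).obj X))

lemma opSingle_smul_restrictedAddHom_eq {g : G}
    (ψ : (restrictScalars (opMapDomain R (mackeyConj H K g))).obj M ⟶
      (restrictScalars (opMapDomain R (mackeyInterIncl H K g))).obj X)
    {h h' : H} {k k' : K} (he : (h : G) * g * k = h' * g * k') (r s : R) (m : M) :
    opSingle k s • restrictedAddHom ψ (opSingle h r • m)
      = opSingle k' (r * s) • restrictedAddHom ψ (opSingle h' (1 : R) • m) := by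
  obtain ⟨x, hh, hk⟩ := exists_mackeyInter_of_mul_mul_eq H K he
  calc opSingle k s • restrictedAddHom ψ (opSingle h r • m)
      = opSingle k s •
          restrictedAddHom ψ (opSingle (mackeyConj H K g x) r • opSingle h' (1 : R) • m) := by
        rw [smul_smul, opSingle_mul_opSingle, one_mul, ← hh]
    _ = opSingle k s • opSingle (mackeyInterIncl H K g x) r •
          restrictedAddHom ψ (opSingle h' (1 : R) • m) := by
        rw [restrictedAddHom_opSingle_smul]
    _ = opSingle k' (r * s) • restrictedAddHom ψ (opSingle h' (1 : R) • m) := by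
        rw [smul_smul, opSingle_mul_opSingle, hk]

def doubleCosetComponent (q : DoubleCoset.Quotient (H : Set G) K) :
    (restrictScalars (opMapDomain R (mackeyConj H K q.out))).obj M ⟶
      (restrictScalars (opMapDomain R (mackeyInterIncl H K q.out))).obj X :=
  restrictedHomMk ((coextendEval φ).flip (opSingle q.out (1 : R))) fun x r m => by
    have hconj : (mackeyConj H K q.out x : G) * q.out = q.out * (x : G) := by
      rw [mackeyConj_apply_coe]; group
    rw [AddMonoidHom.flip_apply, AddMonoidHom.flip_apply, coextendEval_opSingle_smul,
      ← coextendEval_opSingle_mul, opSingle_mul_opSingle, opSingle_mul_opSingle]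
    exact congrArg (coextendEval φ m) (by rw [Subgroup.coe_subtype, hconj, mul_one, one_mul]; rfl)

lemma restrictedAddHom_doubleCosetComponent (q : DoubleCoset.Quotient (H : Set G) K) :
    restrictedAddHom (doubleCosetComponent φ q) = (coextendEval φ).flip (opSingle q.out (1 : R)) :=
  rfl

variable (ψ : ∀ q : DoubleCoset.Quotient (H : Set G) K,
  (restrictScalars (opMapDomain R (mackeyConj H K q.out))).obj M ⟶
    (restrictScalars (opMapDomain R (mackeyInterIncl H K q.out))).obj X)

def gluedEval (m : M) : (MonoidAlgebra R G)ᵐᵒᵖ →+ X :=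
  (Finsupp.liftAddHom fun g =>
    ((smulAddHom (MonoidAlgebra R K)ᵐᵒᵖ X).flip (restrictedAddHom (ψ (DoubleCoset.mk H K g))
      (opSingle (doubleCosetFactors H K g).1 (1 : R) • m))).comp
      ((opAddEquiv : MonoidAlgebra R K ≃+ _).toAddMonoidHom.comp
        (singleAddHom (doubleCosetFactors H K g).2))).comp
    (coeffAddEquiv.toAddMonoidHom.comp opAddEquiv.symm.toAddMonoidHom)

lemma gluedEval_opSingle (m : M) (g : G) (r : R) :
    gluedEval ψ m (opSingle g r) = opSingle (doubleCosetFactors H K g).2 r •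
      restrictedAddHom (ψ (DoubleCoset.mk H K g))
        (opSingle (doubleCosetFactors H K g).1 (1 : R) • m) := by
  simp [gluedEval]

lemma gluedEval_opSingle_of_eq (q : DoubleCoset.Quotient (H : Set G) K) (h : H) (k : K)
    {g : G} (he : (h : G) * q.out * k = g) (r s : R) (m : M) :
    gluedEval ψ m (opSingle g (r * s))
      = opSingle k s • restrictedAddHom (ψ q) (opSingle h r • m) := by
  obtain rfl : DoubleCoset.mk H K g = q := by rw [← he]; exact mk_mul_out_mul H K q h.2 k.2
  rw [gluedEval_opSingle,
    opSingle_smul_restrictedAddHom_eq _ (he.trans (doubleCosetFactors_spec H K g).symm)]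

lemma gluedEval_opSingle_mul_right (m : M) (t : G) (r : R) (k : K) (r' : R) :
    gluedEval ψ m (opSingle (t * k) (r * r'))
      = opSingle k r' • gluedEval ψ m (opSingle t r) := by
  obtain ⟨⟨h₀, k₀⟩, he⟩ := exists_mul_out_mul_eq H K t
  have ht := gluedEval_opSingle_of_eq ψ _ h₀ k₀ he r 1 m
  rw [mul_one] at ht
  have htk : (h₀ : G) * (DoubleCoset.mk H K t).out * ((k₀ * k : K) : G) = t * k := by
    rw [Subgroup.coe_mul, ← mul_assoc, he]
  rw [ht, gluedEval_opSingle_of_eq ψ _ h₀ (k₀ * k) htk, smul_smul, opSingle_mul_opSingle, one_mul]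

lemma gluedEval_opSingle_smul (m : M) (t : G) (r : R) (h : H) (r' : R) :
    gluedEval ψ (opSingle h r' • m) (opSingle t r)
      = gluedEval ψ m (opSingle (h * t) (r' * r)) := by
  obtain ⟨⟨h₀, k₀⟩, he⟩ := exists_mul_out_mul_eq H K t
  have ht := gluedEval_opSingle_of_eq ψ _ h₀ k₀ he 1 r (opSingle h r' • m)
  rw [one_mul] at ht
  have hht : ((h * h₀ : H) : G) * (DoubleCoset.mk H K t).out * k₀ = h * t := by
    rw [Subgroup.coe_mul, mul_assoc, mul_assoc, ← mul_assoc _ _ (k₀ : G), he]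
  rw [ht, gluedEval_opSingle_of_eq ψ _ (h * h₀) k₀ hht, smul_smul, opSingle_mul_opSingle, mul_one]

lemma gluedEval_add (m m' : M) :
    gluedEval ψ (m + m') = gluedEval ψ m + gluedEval ψ m' := by
  refine AddMonoidHom.ext fun b => ?_
  induction b using opSingle_induction with
  | zero => simp only [map_zero]
  | add a b ha hb => simp only [map_add, ha, hb]
  | single t r => simp only [AddMonoidHom.add_apply, gluedEval_opSingle, smul_add, map_add]

def glueDoubleCosetComponents :
    M ⟶ (restrictScalars (opMapDomain R H.subtype)).obj
      ((coextendScalars (opMapDomain R K.subtype)).obj X) :=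
  coextendHomMk (AddMonoidHom.mk' (gluedEval ψ) (gluedEval_add ψ))
    (fun m t r k r' => gluedEval_opSingle_mul_right ψ m t r k r')
    (fun m t r h r' => gluedEval_opSingle_smul ψ m t r h r')

lemma coextendEval_glueDoubleCosetComponents (m : M) :
    coextendEval (glueDoubleCosetComponents ψ) m = gluedEval ψ m :=
  rfl

lemma doubleCosetComponent_glueDoubleCosetComponents :
    doubleCosetComponent (glueDoubleCosetComponents ψ) = ψ :=
  funext fun q => restrictedAddHom_injective <| AddMonoidHom.ext fun m => by
    have hq := gluedEval_opSingle_of_eq ψ q 1 1 (g := q.out) (by simp) 1 1 m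
    rwa [mul_one, opSingle_one_one, one_smul, opSingle_one_one, one_smul] at hq

lemma glueDoubleCosetComponents_doubleCosetComponent :
    glueDoubleCosetComponents (doubleCosetComponent φ) = φ := by
  refine hom_ext_of_coextendEval_opSingle fun m g r => ?_
  obtain ⟨⟨h, k⟩, he⟩ := exists_mul_out_mul_eq H K g
  dsimp only at he
  have hg := gluedEval_opSingle_of_eq (doubleCosetComponent φ) _ h k he 1 r m
  rw [one_mul] at hg
  rw [coextendEval_glueDoubleCosetComponents, hg, restrictedAddHom_doubleCosetComponent,
    AddMonoidHom.flip_apply, coextendEval_opSingle_smul, ← coextendEval_opSingle_mul,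
    opSingle_mul_opSingle, opSingle_mul_opSingle, Subgroup.coe_subtype, Subgroup.coe_subtype, he,
    one_mul, one_mul]

end Components

section HeartEquiv

variable {H K : Subgroup G} {R : Type*} [Ring R] (M : ModuleCat (MonoidAlgebra R H)ᵐᵒᵖ)
  (X : ModuleCat (MonoidAlgebra R K)ᵐᵒᵖ)

def homCoextendEquivPi :
    (M ⟶ (restrictScalars (opMapDomain R H.subtype)).obj
      ((coextendScalars (opMapDomain R K.subtype)).obj X)) ≃
    ∀ q : DoubleCoset.Quotient (H : Set G) K,
      (restrictScalars (opMapDomain R (mackeyConj H K q.out))).obj M ⟶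
        (restrictScalars (opMapDomain R (mackeyInterIncl H K q.out))).obj X where
  toFun := doubleCosetComponent
  invFun := glueDoubleCosetComponents
  left_inv := glueDoubleCosetComponents_doubleCosetComponent
  right_inv := doubleCosetComponent_glueDoubleCosetComponents

end HeartEquiv

lemma doubleCosetComponent_comp {H K : Subgroup G} {R : Type*} [Ring R]
    {M : ModuleCat (MonoidAlgebra R H)ᵐᵒᵖ} {X X' : ModuleCat (MonoidAlgebra R K)ᵐᵒᵖ}
    (φ : M ⟶ (restrictScalars (opMapDomain R H.subtype)).obj
      ((coextendScalars (opMapDomain R K.subtype)).obj X))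
    (u : X ⟶ X') (q : DoubleCoset.Quotient (H : Set G) K) :
    doubleCosetComponent (φ ≫ (restrictScalars _).map ((coextendScalars _).map u)) q
      = doubleCosetComponent φ q ≫ (restrictScalars _).map u :=
  rfl

def sigmaDescEquiv {C : Type*} [Category C] {J : Type*} (f : J → C) [HasCoproduct f] (T : C) :
    (∀ j, f j ⟶ T) ≃ (∐ f ⟶ T) where
  toFun := Sigma.desc
  invFun u j := Sigma.ι f j ≫ u
  left_inv t := funext fun j => Sigma.ι_desc t j
  right_inv _ := Sigma.hom_ext _ _ fun j => Sigma.ι_desc _ j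

lemma sigmaDescEquiv_comp {C : Type*} [Category C] {J : Type*} (f : J → C) [HasCoproduct f]
    {T T' : C} (t : ∀ j, f j ⟶ T) (u : T ⟶ T') :
    sigmaDescEquiv f T' (fun j => t j ≫ u) = sigmaDescEquiv f T t ≫ u :=
  Sigma.hom_ext _ _ fun j => by simp [sigmaDescEquiv]

section Assembly

universe u

variable {H K : Subgroup G} {R : Type u} [Ring R]
  {IndG : ModuleCat.{u} (MonoidAlgebra R H)ᵐᵒᵖ ⥤ ModuleCat.{u} (MonoidAlgebra R G)ᵐᵒᵖ}
  (adjG : IndG ⊣ restrictScalars (opMapDomain R H.subtype))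
  {IndK : ∀ q : DoubleCoset.Quotient (H : Set G) K,
    ModuleCat.{u} (MonoidAlgebra R (mackeyInter H K q.out))ᵐᵒᵖ ⥤
      ModuleCat.{u} (MonoidAlgebra R K)ᵐᵒᵖ}
  (adjK : ∀ q, IndK q ⊣ restrictScalars (opMapDomain R (mackeyInterIncl H K q.out)))
  (M : ModuleCat.{u} (MonoidAlgebra R H)ᵐᵒᵖ)

def mackeyHomEquiv (X : ModuleCat (MonoidAlgebra R K)ᵐᵒᵖ) :
    ((restrictScalars (opMapDomain R K.subtype)).obj (IndG.obj M) ⟶ X) ≃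
      ((∐ fun q => (IndK q).obj ((restrictScalars (opMapDomain R (mackeyConj H K q.out))).obj M))
        ⟶ X) :=
  ((restrictCoextendScalarsAdj _).homEquiv _ X).trans <| (adjG.homEquiv M _).trans <|
    (homCoextendEquivPi M X).trans <|
      (Equiv.piCongrRight fun q => ((adjK q).homEquiv _ X).symm).trans (sigmaDescEquiv _ X)

lemma mackeyHomEquiv_comp {X X' : ModuleCat (MonoidAlgebra R K)ᵐᵒᵖ}
    (t : (restrictScalars (opMapDomain R K.subtype)).obj (IndG.obj M) ⟶ X) (u : X ⟶ X') :
    mackeyHomEquiv adjG adjK M X' (t ≫ u) = mackeyHomEquiv adjG adjK M X t ≫ u := by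
  simp only [mackeyHomEquiv, Equiv.trans_apply, Adjunction.homEquiv_naturality_right]
  rw [← sigmaDescEquiv_comp]
  congr 1
  funext q
  exact (congrArg ((adjK q).homEquiv _ X').symm (doubleCosetComponent_comp _ u q)).trans
    ((adjK q).homEquiv_naturality_right_symm _ u)

end Assembly

end Mackey

end

/-- Right modules are left modules over the opposite group ring. The conjugate `gM` is modelled as
`M` restricted along conjugation `K ∩ g⁻¹Hg → H`, and the induction functors are arbitrary left
adjoints of the restriction functors. -/
theorem mackey_formula
    (H K : Subgroup G) (R : Type) [Ring R]
    (M : ModuleCat (MonoidAlgebra R ↥H)ᵐᵒᵖ)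
    (IndG : ModuleCat (MonoidAlgebra R ↥H)ᵐᵒᵖ ⥤ ModuleCat (MonoidAlgebra R G)ᵐᵒᵖ)
    (adjG : IndG ⊣ ModuleCat.restrictScalars
      (RingHom.op (MonoidAlgebra.mapDomainRingHom R H.subtype)))
    (IndK : ∀ q : DoubleCoset.Quotient (H : Set G) (K : Set G),
      ModuleCat (MonoidAlgebra R ↥(mackeyInter H K (Quotient.out q)))ᵐᵒᵖ ⥤
        ModuleCat (MonoidAlgebra R ↥K)ᵐᵒᵖ)
    (adjK : ∀ q : DoubleCoset.Quotient (H : Set G) (K : Set G),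
      IndK q ⊣ ModuleCat.restrictScalars
        (RingHom.op (MonoidAlgebra.mapDomainRingHom R
          (Subgroup.inclusion (inf_le_left : mackeyInter H K (Quotient.out q) ≤ K))))) :
    Nonempty
      ((ModuleCat.restrictScalars
          (RingHom.op (MonoidAlgebra.mapDomainRingHom R K.subtype))).obj (IndG.obj M) ≅
        ∐ fun q : DoubleCoset.Quotient (H : Set G) (K : Set G) =>
          (IndK q).obj ((ModuleCat.restrictScalars
            (RingHom.op (MonoidAlgebra.mapDomainRingHom R
              (mackeyConj H K (Quotient.out q))))).obj M)) := by
  refine ⟨Coyoneda.ext _ _ (fun t => Mackey.mackeyHomEquiv adjG adjK M _ t)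
    (fun t => (Mackey.mackeyHomEquiv adjG adjK M _).symm t) (fun t => by simp) (fun t => by simp)
    (fun t u => ?_)⟩
  rw [Equiv.symm_apply_eq, Mackey.mackeyHomEquiv_comp, Equiv.apply_symm_apply]
end

section
/- Let R be a ring, H, K ≤ G groups, and g ∈ G. Then there is an isomorphism of (R[H], R[K])-bimodules R[Hg] ⊗_{R[K ∩ g⁻¹Hg]} R[K] ≅ R[HgK], given by hg ⊗ k ↦ hgk, where R[X] for a subset X ⊆ G denotes the free R-submodule of R[G] spanned by X. -/
open MonoidAlgebra
open scoped Pointwise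

/-!
`R[HgK]` is free on the double coset `HgK`, and every `d ∈ HgK` factors as `d = x * y` with
`x ∈ Hg`, `y ∈ K`, uniquely up to `(x, y) ↦ (x * l, l⁻¹ * y)` with `l ∈ K ∩ g⁻¹Hg`: indeed
`l = x₂⁻¹ * x₁` for two factorisations. Hence a balanced biadditive `β` takes the same value on
`(single x 1, single y t)` for all factorisations of `d`, which defines the lift on the basis
vector `single d t`; the lift is unique because the products `single x r * single y 1` span
`R[HgK]` additively.
-/

lemma Set.exists_inv_mul_mem_of_mem_mul {G : Type*} [Group G] {X Y : Set G} {d : G}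
    (hd : d ∈ X * Y) : ∃ a ∈ X, a⁻¹ * d ∈ Y := by
  obtain ⟨a, ha, c, hc, rfl⟩ := Set.mem_mul.1 hd
  exact ⟨a, ha, by rwa [inv_mul_cancel_left]⟩

namespace MonoidAlgebra

section Span

variable {R G : Type*} [Semiring R]

variable (R) in
noncomputable def spanSingles (S : Set G) : Submodule R (MonoidAlgebra R G) :=
  Submodule.span R ((fun x : G => single x (1 : R)) '' S)

variable {S S' U : Set G}

lemma mem_spanSingles_iff {x : MonoidAlgebra R G} :
    x ∈ spanSingles R S ↔ ↑x.coeff.support ⊆ S := by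
  rw [spanSingles, ← supported_eq_span_single, mem_supported]

lemma single_mem_spanSingles {a : G} (ha : a ∈ S) (r : R) : single a r ∈ spanSingles R S := by
  simpa [smul_single'] using (spanSingles R S).smul_mem r (Submodule.subset_span ⟨a, ha, rfl⟩)

lemma spanSingles_addMonoidHom_ext {T : Type*} [AddMonoid T] {f g : spanSingles R S →+ T}
    (h : ∀ a (ha : a ∈ S) (r : R), f ⟨single a r, single_mem_spanSingles ha r⟩ =
      g ⟨single a r, single_mem_spanSingles ha r⟩) :
    f = g := by
  ext ⟨x, hx⟩
  induction hx using Submodule.closure_induction with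
  | zero => exact (map_zero f).trans (map_zero g).symm
  | add x y hx hy hfgx hfgy =>
    change f (⟨x, hx⟩ + ⟨y, hy⟩) = g (⟨x, hx⟩ + ⟨y, hy⟩)
    rw [map_add, map_add, hfgx, hfgy]
  | smul_mem r _ hx =>
    obtain ⟨a, ha, rfl⟩ := hx
    simpa [smul_single'] using h a ha r

variable [Mul G]

lemma mul_mem_spanSingles {x y : MonoidAlgebra R G} (hx : x ∈ spanSingles R S)
    (hy : y ∈ spanSingles R S') (h : S * S' ⊆ U) : x * y ∈ spanSingles R U := by
  classical
  rw [mem_spanSingles_iff] at *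
  grw [support_coeff_mul_subset, Finset.coe_mul, hx, hy, h]

lemma spanSingles_mul_addMonoidHom_ext {T : Type*} [AddMonoid T]
    {γ₁ γ₂ : spanSingles R (S * S') →+ T}
    (h : ∀ (x : spanSingles R S) (y : spanSingles R S')
      (hxy : (x : MonoidAlgebra R G) * y ∈ spanSingles R (S * S')),
      γ₁ ⟨_, hxy⟩ = γ₂ ⟨_, hxy⟩) :
    γ₁ = γ₂ :=
  spanSingles_addMonoidHom_ext fun d hd t => by
    obtain ⟨a, ha, c, hc, rfl⟩ := Set.mem_mul.1 hd
    have hmul : single a t * single c (1 : R) = single (a * c) t := by simp [single_mul_single]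
    simpa [hmul] using h ⟨single a t, single_mem_spanSingles ha t⟩
      ⟨single c 1, single_mem_spanSingles hc 1⟩ (hmul ▸ single_mem_spanSingles hd t)

end Span

section Balanced

variable {R G T : Type*} [Semiring R] [Group G] [AddCommGroup T] {X Y L : Set G}

structure IsBalanced (L : Set G) (β : spanSingles R X → spanSingles R Y → T) : Prop where
  add_left : ∀ x₁ x₂ y, β (x₁ + x₂) y = β x₁ y + β x₂ y
  add_right : ∀ x y₁ y₂, β x (y₁ + y₂) = β x y₁ + β x y₂
  smul_balanced : ∀ (r : R) x y, β (r • x) y = β x (r • y)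
  mul_balanced : ∀ (x : spanSingles R X) (y : spanSingles R Y), ∀ l ∈ L,
    ∀ (hx : (x : MonoidAlgebra R G) * single l 1 ∈ spanSingles R X)
      (hy : single l 1 * (y : MonoidAlgebra R G) ∈ spanSingles R Y),
      β ⟨_, hx⟩ y = β x ⟨_, hy⟩

namespace IsBalanced

variable {β : spanSingles R X → spanSingles R Y → T}

lemma apply_single_single (hβ : IsBalanced L β) {a c : G} (ha : a ∈ X) (hc : c ∈ Y)
    (r s : R) :
    β ⟨single a r, single_mem_spanSingles ha r⟩ ⟨single c s, single_mem_spanSingles hc s⟩ =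
      β ⟨single a 1, single_mem_spanSingles ha 1⟩
        ⟨single c (r * s), single_mem_spanSingles hc (r * s)⟩ := by
  convert hβ.smul_balanced r ⟨single a 1, single_mem_spanSingles ha 1⟩
    ⟨single c s, single_mem_spanSingles hc s⟩ using 2 <;> ext1 <;> simp

lemma apply_single_one_single_eq (hβ : IsBalanced L β) {a₁ a₂ c₁ c₂ : G} (ha₁ : a₁ ∈ X)
    (ha₂ : a₂ ∈ X) (hc₁ : c₁ ∈ Y) (hc₂ : c₂ ∈ Y) (h : a₁ * c₁ = a₂ * c₂) (hl : a₂⁻¹ * a₁ ∈ L)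
    (t : R) :
    β ⟨single a₁ 1, single_mem_spanSingles ha₁ 1⟩
        ⟨single c₁ t, single_mem_spanSingles hc₁ t⟩ =
      β ⟨single a₂ 1, single_mem_spanSingles ha₂ 1⟩
        ⟨single c₂ t, single_mem_spanSingles hc₂ t⟩ := by
  have hx : single a₂ (1 : R) * single (a₂⁻¹ * a₁) 1 = single a₁ 1 := by
    simp [single_mul_single]
  have hy : single (a₂⁻¹ * a₁) (1 : R) * single c₁ t = single c₂ t := by
    rw [single_mul_single, one_mul, mul_assoc, h, inv_mul_cancel_left]
  convert hβ.mul_balanced ⟨single a₂ 1, single_mem_spanSingles ha₂ 1⟩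
    ⟨single c₁ t, single_mem_spanSingles hc₁ t⟩ _ hl (hx ▸ single_mem_spanSingles ha₁ 1)
    (hy ▸ single_mem_spanSingles hc₂ t) using 2 <;> ext1
  exacts [hx.symm, hy.symm]

open Classical in
noncomputable def liftSingle (hβ : IsBalanced L β) (d : G) : R →+ T :=
  if hd : d ∈ X * Y then
    let a := (Set.exists_inv_mul_mem_of_mem_mul hd).choose
    have ha : a ∈ X ∧ a⁻¹ * d ∈ Y := (Set.exists_inv_mul_mem_of_mem_mul hd).choose_spec
    AddMonoidHom.mk'
      (fun t => β ⟨single a 1, single_mem_spanSingles ha.1 1⟩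
        ⟨single (a⁻¹ * d) t, single_mem_spanSingles ha.2 t⟩)
      (fun s t => by rw [← hβ.add_right]; congr 1; ext1; exact single_add ..)
  else 0

noncomputable def lift (hβ : IsBalanced L β) : spanSingles R (X * Y) →+ T :=
  (Finsupp.liftAddHom hβ.liftSingle).comp <|
    coeffAddEquiv.toAddMonoidHom.comp (spanSingles R (X * Y)).subtype.toAddMonoidHom

lemma lift_single_mul_single (hβ : IsBalanced L β)
    (hL : ∀ x₁ ∈ X, ∀ y₁ ∈ Y, ∀ x₂ ∈ X, ∀ y₂ ∈ Y,
      x₁ * y₁ = x₂ * y₂ → x₂⁻¹ * x₁ ∈ L)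
    {a c : G} (ha : a ∈ X) (hc : c ∈ Y) (r s : R)
    (h : single a r * single c s ∈ spanSingles R (X * Y)) :
    hβ.lift ⟨_, h⟩ = β ⟨single a r, single_mem_spanSingles ha r⟩
      ⟨single c s, single_mem_spanSingles hc s⟩ := by
  have hac : a * c ∈ X * Y := Set.mul_mem_mul ha hc
  obtain ⟨ha', hc'⟩ := (Set.exists_inv_mul_mem_of_mem_mul hac).choose_spec
  have hfac := mul_inv_cancel_left (Set.exists_inv_mul_mem_of_mem_mul hac).choose (a * c)
  have hlift : hβ.lift ⟨_, h⟩ = hβ.liftSingle (a * c) (r * s) := by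
    simp only [single_mul_single]
    exact Finsupp.liftAddHom_apply_single _ _ _
  rw [hlift, liftSingle, dif_pos hac, hβ.apply_single_single ha hc]
  exact hβ.apply_single_one_single_eq ha' ha hc' hc hfac (hL _ ha' _ hc' _ ha _ hc hfac) _

lemma lift_single_mul (hβ : IsBalanced L β)
    (hL : ∀ x₁ ∈ X, ∀ y₁ ∈ Y, ∀ x₂ ∈ X, ∀ y₂ ∈ Y,
      x₁ * y₁ = x₂ * y₂ → x₂⁻¹ * x₁ ∈ L)
    {a : G} (ha : a ∈ X) (r : R) (y : spanSingles R Y)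
    (h : single a r * (y : MonoidAlgebra R G) ∈ spanSingles R (X * Y)) :
    hβ.lift ⟨_, h⟩ = β ⟨single a r, single_mem_spanSingles ha r⟩ y := by
  let F : spanSingles R Y →+ T := AddMonoidHom.mk'
    (fun y => hβ.lift ⟨_, mul_mem_spanSingles (single_mem_spanSingles ha r) y.2 subset_rfl⟩)
    (fun y₁ y₂ => by rw [← map_add]; congr 1; ext1; exact mul_add ..)
  have hF := spanSingles_addMonoidHom_ext (f := F) (g := .mk' _ (hβ.add_right _))
    fun c hc s => hβ.lift_single_mul_single hL ha hc r s _
  exact DFunLike.congr_fun hF y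

lemma lift_mul (hβ : IsBalanced L β)
    (hL : ∀ x₁ ∈ X, ∀ y₁ ∈ Y, ∀ x₂ ∈ X, ∀ y₂ ∈ Y,
      x₁ * y₁ = x₂ * y₂ → x₂⁻¹ * x₁ ∈ L)
    (x : spanSingles R X) (y : spanSingles R Y)
    (h : (x : MonoidAlgebra R G) * y ∈ spanSingles R (X * Y)) :
    hβ.lift ⟨_, h⟩ = β x y := by
  let F : spanSingles R X →+ T := AddMonoidHom.mk'
    (fun x => hβ.lift ⟨_, mul_mem_spanSingles x.2 y.2 subset_rfl⟩)
    (fun x₁ x₂ => by rw [← map_add]; congr 1; ext1; exact add_mul ..)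
  have hF := spanSingles_addMonoidHom_ext (f := F) (g := .mk' (β · y) (hβ.add_left · · y))
    fun a ha r => hβ.lift_single_mul hL ha r y _
  exact DFunLike.congr_fun hF x

theorem existsUnique_lift (hβ : IsBalanced L β)
    (hL : ∀ x₁ ∈ X, ∀ y₁ ∈ Y, ∀ x₂ ∈ X, ∀ y₂ ∈ Y,
      x₁ * y₁ = x₂ * y₂ → x₂⁻¹ * x₁ ∈ L) :
    ∃! γ : spanSingles R (X * Y) →+ T, ∀ (x : spanSingles R X) (y : spanSingles R Y)
      (h : (x : MonoidAlgebra R G) * y ∈ spanSingles R (X * Y)), γ ⟨_, h⟩ = β x y :=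
  ⟨hβ.lift, hβ.lift_mul hL, fun _ hγ =>
    spanSingles_mul_addMonoidHom_ext fun x y h => (hγ x y h).trans (hβ.lift_mul hL x y h).symm⟩

end IsBalanced

end Balanced

end MonoidAlgebra

section DoubleCoset

variable {G : Type*} [Group G] {H K : Subgroup G} {g : G}

lemma rightCoset_mul_singleton_of_mem_map_conj {l : G}
    (hl : l ∈ H.map (MulAut.conj g⁻¹).toMonoidHom) : (H : Set G) * {g} * {l} = H * {g} := by
  obtain ⟨h, hh, rfl⟩ := hl
  have hconj : g * (MulAut.conj g⁻¹).toMonoidHom h = h * g := by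
    rw [MulEquiv.coe_toMonoidHom, MulAut.conj_apply]
    group
  rw [mul_assoc, Set.singleton_mul_singleton, hconj, ← Set.singleton_mul_singleton, ← mul_assoc,
    Subgroup.subgroup_mul_singleton hh]

lemma inv_mul_mem_inf_map_conj_of_mul_eq {x₁ x₂ y₁ y₂ : G}
    (hx₁ : x₁ ∈ (H : Set G) * {g}) (hx₂ : x₂ ∈ (H : Set G) * {g}) (hy₁ : y₁ ∈ K) (hy₂ : y₂ ∈ K)
    (h : x₁ * y₁ = x₂ * y₂) :
    x₂⁻¹ * x₁ ∈ K ⊓ H.map (MulAut.conj g⁻¹).toMonoidHom := by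
  have hK : x₂⁻¹ * x₁ ∈ K := by
    rw [show x₂⁻¹ * x₁ = y₂ * y₁⁻¹ by
      rw [inv_mul_eq_iff_eq_mul, ← mul_assoc, ← h, mul_inv_cancel_right]]
    exact K.mul_mem hy₂ (K.inv_mem hy₁)
  rw [Set.mul_singleton] at hx₁ hx₂
  obtain ⟨h₁, hh₁, rfl⟩ := hx₁
  obtain ⟨h₂, hh₂, rfl⟩ := hx₂
  refine ⟨hK, h₂⁻¹ * h₁, H.mul_mem (H.inv_mem hh₂) hh₁, ?_⟩
  rw [MulEquiv.coe_toMonoidHom, MulAut.conj_apply]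
  group

end DoubleCoset

/-- Let `R` be a ring, `H, K ≤ G` groups and `g ∈ G`. Then multiplication induces an isomorphism
of `(R[H], R[K])`-bimodules `R[Hg] ⊗_{R[K ∩ g⁻¹Hg]} R[K] ≅ R[HgK]`, `hg ⊗ k ↦ hgk`, where `R[X]`
for a subset `X ⊆ G` denotes the free `R`-submodule of `R[G]` spanned by `X`. This is expressed
by the universal property of the balanced tensor product: multiplication `R[Hg] × R[K] → R[HgK]`
is well defined, `R[K ∩ g⁻¹Hg]`-balanced, compatible with the left `R[H]`- and right
`R[K]`-actions, and `R[HgK]` together with this map is universal among balanced biadditive maps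
out of `R[Hg] × R[K]`. -/
theorem span_doset_is_balanced_tensor_product
    (G : Type) [Group G] (H K : Subgroup G) (R : Type) [Ring R] (g : G) :
    -- notation: A = R[Hg], B = R[K], C = R[HgK], L = K ∩ g⁻¹Hg
    letI A : Submodule R (MonoidAlgebra R G) :=
      Submodule.span R ((fun x : G => single x (1 : R)) '' ((H : Set G) * ({g} : Set G)))
    letI B : Submodule R (MonoidAlgebra R G) :=
      Submodule.span R ((fun x : G => single x (1 : R)) '' (K : Set G))
    letI C : Submodule R (MonoidAlgebra R G) :=
      Submodule.span R ((fun x : G => single x (1 : R)) ''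
        DoubleCoset.doubleCoset g (H : Set G) (K : Set G))
    letI L : Subgroup G := K ⊓ Subgroup.map (MulAut.conj g⁻¹).toMonoidHom H
    -- multiplication is well defined from A × B to C
    (∀ x ∈ A, ∀ y ∈ B, x * y ∈ C) ∧
    -- A is stable under the right R[L]-action and B under the left R[L]-action
    (∀ x ∈ A, ∀ l ∈ L, x * single l (1 : R) ∈ A) ∧
    (∀ y ∈ B, ∀ l ∈ L, single l (1 : R) * y ∈ B) ∧
    -- A and C are stable under left multiplication by H; B and C under right mult. by K
    (∀ h ∈ H, (∀ x ∈ A, single h (1 : R) * x ∈ A) ∧ (∀ c ∈ C, single h (1 : R) * c ∈ C)) ∧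
    (∀ k ∈ K, (∀ y ∈ B, y * single k (1 : R) ∈ B) ∧ (∀ c ∈ C, c * single k (1 : R) ∈ C)) ∧
    -- universal property: (C, multiplication) is the balanced tensor product of A and B over
    -- R[L]; together with the trivially verified bimodule equivariance of multiplication, this
    -- says that `hg ⊗ k ↦ hgk` is an isomorphism of (R[H], R[K])-bimodules
    -- `R[Hg] ⊗_{R[L]} R[K] ≅ R[HgK]`
    ∀ (T : Type) [AddCommGroup T] (β : A → B → T),
      (∀ x₁ x₂ y, β (x₁ + x₂) y = β x₁ y + β x₂ y) →
      (∀ x y₁ y₂, β x (y₁ + y₂) = β x y₁ + β x y₂) →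
      (∀ (r : R) (x : A) (y : B) (hx : r • (x : MonoidAlgebra R G) ∈ A)
          (hy : r • (y : MonoidAlgebra R G) ∈ B), β ⟨_, hx⟩ y = β x ⟨_, hy⟩) →
      (∀ (x : A) (y : B) (l : L)
          (hx : (x : MonoidAlgebra R G) * single (l : G) (1 : R) ∈ A)
          (hy : single (l : G) (1 : R) * (y : MonoidAlgebra R G) ∈ B),
          β ⟨_, hx⟩ y = β x ⟨_, hy⟩) →
      ∃! γ : C →+ T, ∀ (x : A) (y : B) (h : (x : MonoidAlgebra R G) * y ∈ C),
        γ ⟨_, h⟩ = β x y := by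
  have hsingle (a : G) : single a (1 : R) ∈ spanSingles R {a} :=
    single_mem_spanSingles (Set.mem_singleton a) 1
  refine ⟨fun x hx y hy => mul_mem_spanSingles hx hy subset_rfl,
    fun x hx l hl => mul_mem_spanSingles hx (hsingle l)
      (rightCoset_mul_singleton_of_mem_map_conj hl.2).subset,
    fun y hy l hl => mul_mem_spanSingles (hsingle l) hy
      (Subgroup.singleton_mul_subgroup hl.1).subset,
    fun h hh => ⟨fun x hx => mul_mem_spanSingles (hsingle h) hx
        (by rw [← mul_assoc, Subgroup.singleton_mul_subgroup hh]),
      fun c hc => mul_mem_spanSingles (hsingle h) hc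
        (by rw [DoubleCoset.doubleCoset, ← mul_assoc, ← mul_assoc,
          Subgroup.singleton_mul_subgroup hh])⟩,
    fun k hk => ⟨fun y hy => mul_mem_spanSingles hy (hsingle k)
        (Subgroup.subgroup_mul_singleton hk).subset,
      fun c hc => mul_mem_spanSingles hc (hsingle k)
        (by rw [DoubleCoset.doubleCoset, mul_assoc, Subgroup.subgroup_mul_singleton hk])⟩,
    fun T _ β hadd₁ hadd₂ hsmul hmul => IsBalanced.existsUnique_lift
      ⟨hadd₁, hadd₂, fun r x y => hsmul r x y _ _, fun x y l hl => hmul x y ⟨l, hl⟩⟩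
      fun _ hx₁ _ hy₁ _ hx₂ _ hy₂ => inv_mul_mem_inf_map_conj_of_mul_eq hx₁ hx₂ hy₁ hy₂⟩
end
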